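/- arXiv:1404.6215 — 7 statements merged into one kernel-verified Lean document; each statement's English description precedes it below -/
import Mathlib

section
/- Let A be an integral domain with field of fractions K. If there exists a surjective demi-valuation ν : K* → ⊕_{i∈I} ℤ (direct sum of copies of ℤ with componentwise ordering) such that R(ν) = A, then A is a unique factorization domain. -/
/-!
Restricted to `A`, `v a := ν a` takes values in `I →₀ ℕ`, is additive, and since `A = R(ν)`
we get `a ∣ b ↔ v a ≤ v b`. Surjectivity of `ν` provides `π i ∈ A` with `v (π i) = single i 1`;
divisibility by `π i` is read off the `i`-th coordinate, so `π i` is prime, and every `a ≠ 0` is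
associated to `∏ i, π i ^ v a i`, which has the same divisor.
-/

structure IsFreeDivisorMap {A I : Type*} [CommMonoidWithZero A] (v : A → I →₀ ℤ) : Prop where
  map_mul : ∀ a b, a ≠ 0 → b ≠ 0 → v (a * b) = v a + v b
  nonneg : ∀ a, a ≠ 0 → 0 ≤ v a
  dvd_of_le : ∀ a b, a ≠ 0 → b ≠ 0 → v a ≤ v b → a ∣ b
  exists_eq_single : ∀ i, ∃ p, p ≠ 0 ∧ v p = Finsupp.single i 1

namespace IsFreeDivisorMap

variable {A I : Type*} [CommMonoidWithZero A] {v : A → I →₀ ℤ}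

theorem map_one [Nontrivial A] (hv : IsFreeDivisorMap v) : v 1 = 0 := by
  have h := hv.map_mul 1 1 one_ne_zero one_ne_zero
  rwa [mul_one, left_eq_add] at h

theorem map_multiset_prod [NoZeroDivisors A] [Nontrivial A] (hv : IsFreeDivisorMap v)
    {s : Multiset A} (hs : 0 ∉ s) : v s.prod = (s.map v).sum := by
  induction s using Multiset.induction_on with
  | empty => simpa using hv.map_one
  | cons a s ih =>
    rw [Multiset.mem_cons, not_or] at hs
    rw [Multiset.prod_cons, hv.map_mul _ _ (Ne.symm hs.1) (Multiset.prod_ne_zero hs.2),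
      ih hs.2, Multiset.map_cons, Multiset.sum_cons]

theorem le_of_dvd (hv : IsFreeDivisorMap v) {a b : A} (hb : b ≠ 0) (h : a ∣ b) :
    v a ≤ v b := by
  obtain ⟨c, rfl⟩ := h
  rw [hv.map_mul _ _ (left_ne_zero_of_mul hb) (right_ne_zero_of_mul hb)]
  exact le_add_of_nonneg_right (hv.nonneg c (right_ne_zero_of_mul hb))

theorem dvd_iff_le (hv : IsFreeDivisorMap v) {a b : A} (ha : a ≠ 0) (hb : b ≠ 0) :
    a ∣ b ↔ v a ≤ v b :=
  ⟨hv.le_of_dvd hb, hv.dvd_of_le a b ha hb⟩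

theorem associated_of_eq [IsLeftCancelMulZero A] (hv : IsFreeDivisorMap v) {a b : A}
    (ha : a ≠ 0) (hb : b ≠ 0) (h : v a = v b) : Associated a b :=
  associated_of_dvd_dvd ((hv.dvd_iff_le ha hb).2 h.le) ((hv.dvd_iff_le hb ha).2 h.ge)

theorem dvd_iff_one_le_apply (hv : IsFreeDivisorMap v) {p a : A} {i : I} (hp : p ≠ 0)
    (hpv : v p = Finsupp.single i 1) (ha : a ≠ 0) : p ∣ a ↔ 1 ≤ v a i := by
  rw [hv.dvd_iff_le hp ha, hpv, Finsupp.le_def]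
  refine ⟨fun h => by simpa using h i, fun h j => ?_⟩
  rcases eq_or_ne i j with rfl | hij
  · simpa using h
  · simpa [Finsupp.single_apply, hij] using hv.nonneg a ha j

theorem prime_of_eq_single [NoZeroDivisors A] [Nontrivial A] (hv : IsFreeDivisorMap v)
    {p : A} {i : I} (hp : p ≠ 0) (hpv : v p = Finsupp.single i 1) : Prime p := by
  refine ⟨hp, fun hunit => ?_, fun a b hab => ?_⟩
  · have h := (hv.dvd_iff_le hp one_ne_zero).1 hunit.dvd
    rw [hv.map_one, hpv, Finsupp.le_def] at h
    simpa using h i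
  · rcases eq_or_ne a 0 with rfl | ha
    · exact .inl (dvd_zero p)
    rcases eq_or_ne b 0 with rfl | hb
    · exact .inr (dvd_zero p)
    have h := (hv.dvd_iff_one_le_apply hp hpv (mul_ne_zero ha hb)).1 hab
    rw [hv.map_mul a b ha hb, Finsupp.add_apply] at h
    rw [hv.dvd_iff_one_le_apply hp hpv ha, hv.dvd_iff_one_le_apply hp hpv hb]
    have := hv.nonneg a ha i
    have := hv.nonneg b hb i
    omega

theorem exists_prime_factors_eq [NoZeroDivisors A] [Nontrivial A] (hv : IsFreeDivisorMap v)
    (n : I →₀ ℕ) :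
    ∃ s : Multiset A, (∀ p ∈ s, Prime p) ∧ (s.map v).sum = n.mapRange (↑) Nat.cast_zero := by
  choose π hπ0 hπv using hv.exists_eq_single
  induction n using Finsupp.induction_linear with
  | zero => exact ⟨0, by simp, by simp⟩
  | add m n ihm ihn =>
    obtain ⟨s, hs, hsv⟩ := ihm
    obtain ⟨t, ht, htv⟩ := ihn
    refine ⟨s + t, fun p hp => ?_, ?_⟩
    · exact (Multiset.mem_add.1 hp).elim (hs p) (ht p)
    · rw [Multiset.map_add, Multiset.sum_add, hsv, htv, Finsupp.mapRange_add Nat.cast_add]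
  | single i k =>
    refine ⟨Multiset.replicate k (π i), fun p hp => ?_, ?_⟩
    · rw [Multiset.eq_of_mem_replicate hp]
      exact hv.prime_of_eq_single (hπ0 i) (hπv i)
    · simp [Multiset.map_replicate, hπv]

theorem uniqueFactorizationMonoid [IsCancelMulZero A] [Nontrivial A] (hv : IsFreeDivisorMap v) :
    UniqueFactorizationMonoid A := by
  refine .of_exists_prime_factors fun a ha => ?_
  obtain ⟨s, hs, hsv⟩ := hv.exists_prime_factors_eq ((v a).mapRange Int.toNat Int.toNat_zero)
  have hs0 : 0 ∉ s := fun h => (hs 0 h).ne_zero rfl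
  refine ⟨s, hs, hv.associated_of_eq (Multiset.prod_ne_zero hs0) ha ?_⟩
  rw [hv.map_multiset_prod hs0, hsv]
  ext i
  simpa using hv.nonneg a ha i

end IsFreeDivisorMap

theorem map_div_of_map_mul {K G : Type*} [GroupWithZero K] [AddGroup G] {ν : K → G}
    (hmul : ∀ a b : K, a ≠ 0 → b ≠ 0 → ν (a * b) = ν a + ν b) {x y : K} (hx : x ≠ 0)
    (hy : y ≠ 0) : ν (y / x) = ν y - ν x := by
  rw [eq_sub_iff_add_eq, ← hmul _ _ (div_ne_zero hy hx) hx, div_mul_cancel₀ y hx]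

theorem isFreeDivisorMap_comp_algebraMap {A K I : Type*} [CommRing A] [Field K] [Algebra A K]
    (hinj : Function.Injective (algebraMap A K)) (ν : K → (I →₀ ℤ))
    (hmul : ∀ a b : K, a ≠ 0 → b ≠ 0 → ν (a * b) = ν a + ν b)
    (hsurj : ∀ g : I →₀ ℤ, ∃ x : K, x ≠ 0 ∧ ν x = g)
    (hR : ∀ x : K, (x = 0 ∨ (x ≠ 0 ∧ ∀ i, 0 ≤ ν x i)) ↔ x ∈ Set.range (algebraMap A K)) :
    IsFreeDivisorMap fun a => ν (algebraMap A K a) := by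
  have hne {a : A} (ha : a ≠ 0) : algebraMap A K a ≠ 0 := (map_ne_zero_iff _ hinj).2 ha
  have mem_range {x : K} (hx : x ≠ 0) (h : 0 ≤ ν x) : x ∈ Set.range (algebraMap A K) :=
    (hR x).1 (.inr ⟨hx, Finsupp.le_def.1 h⟩)
  refine ⟨fun a b ha hb => ?_, fun a ha => ?_, fun a b ha hb hle => ?_, fun i => ?_⟩
  · rw [map_mul, hmul _ _ (hne ha) (hne hb)]
  · exact Finsupp.le_def.2 (((hR _).2 ⟨a, rfl⟩).resolve_left (hne ha)).2
  · obtain ⟨c, hc⟩ := mem_range (div_ne_zero (hne hb) (hne ha))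
      (by rwa [map_div_of_map_mul hmul (hne ha) (hne hb), sub_nonneg])
    exact ⟨c, hinj (by rw [map_mul, hc, mul_div_cancel₀ _ (hne ha)])⟩
  · obtain ⟨x, hx, hxν⟩ := hsurj (Finsupp.single i 1)
    obtain ⟨p, rfl⟩ := mem_range hx (by rw [hxν]; exact Finsupp.single_nonneg.2 zero_le_one)
    exact ⟨p, fun hp => hx (by rw [hp, map_zero]), hxν⟩

theorem stmt_4_general {A K : Type*} [CommRing A] [IsDomain A]
    [Field K] [Algebra A K] [IsFractionRing A K]
    (I : Type*) (ν : K → (I →₀ ℤ))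
    (hmul : ∀ a b : K, a ≠ 0 → b ≠ 0 → ν (a * b) = ν a + ν b)
    (hsurj : ∀ g : I →₀ ℤ, ∃ x : K, x ≠ 0 ∧ ν x = g)
    (hR : ∀ x : K, (x = 0 ∨ (x ≠ 0 ∧ ∀ i, 0 ≤ ν x i)) ↔ x ∈ Set.range (algebraMap A K)) :
    UniqueFactorizationMonoid A :=
  (isFreeDivisorMap_comp_algebraMap (IsFractionRing.injective A K) ν hmul hsurj hR)
    |>.uniqueFactorizationMonoid

/-- If a domain A admits a surjective ℤ-divisor demi-valuation on its fraction field
with valuation ring A, then A is a UFD. -/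
theorem stmt_4 {A K : Type*} [CommRing A] [IsDomain A]
    [Field K] [Algebra A K] [IsFractionRing A K]
    (I : Type*) (ν : K → (I →₀ ℤ))
    (hmul : ∀ a b : K, a ≠ 0 → b ≠ 0 → ν (a * b) = ν a + ν b)
    (hadd : ∀ a b : K, a ≠ 0 → b ≠ 0 → a + b ≠ 0 → ∀ i, min (ν a i) (ν b i) ≤ ν (a + b) i)
    (hsurj : ∀ g : I →₀ ℤ, ∃ x : K, x ≠ 0 ∧ ν x = g)
    (hR : ∀ x : K, (x = 0 ∨ (x ≠ 0 ∧ ∀ i, 0 ≤ ν x i)) ↔ x ∈ Set.range (algebraMap A K)) :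
    UniqueFactorizationMonoid A :=
  stmt_4_general I ν hmul hsurj hR
end

section
/- Let K be a field, ν : K* → G a demi-valuation into a lattice-ordered abelian group, and A = R(ν) the valuation ring. If ν satisfies the Bézout property (for all nonzero x, y ∈ A there exist c, d ∈ A with ν(cx + dy) = inf(ν(x), ν(y)), with cx+dy ≠ 0), then every finitely generated ideal of A is principal. -/
/-!
If `ν z = inf (ν x) (ν y)` for `z = c x + d y` with `c, d ∈ A`, then `z` lies in `(x, y)`, and
`ν (x / z) ≥ 0`, `ν (y / z) ≥ 0` put `x / z` and `y / z` in `A`, so `(x, y) = (z)`. An ideal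
generated by finitely many elements is then principal by induction on the number of generators.
-/

namespace DemiValuation

variable {K : Type*} [Field K] {G : Type*} [AddCommGroup G] (ν : K → G)

theorem map_one_eq_zero (hmul : ∀ a b : K, a ≠ 0 → b ≠ 0 → ν (a * b) = ν a + ν b) :
    ν 1 = 0 := by
  simpa using hmul 1 1 one_ne_zero one_ne_zero

theorem map_inv_eq_neg (hmul : ∀ a b : K, a ≠ 0 → b ≠ 0 → ν (a * b) = ν a + ν b)
    {z : K} (hz : z ≠ 0) : ν z⁻¹ = -ν z := by
  have h := hmul z z⁻¹ hz (inv_ne_zero hz)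
  rw [mul_inv_cancel₀ hz, map_one_eq_zero ν hmul] at h
  exact eq_neg_of_add_eq_zero_right h.symm

variable [Lattice G] [AddLeftMono G]
  (hmul : ∀ a b : K, a ≠ 0 → b ≠ 0 → ν (a * b) = ν a + ν b)
  {S : Subring K} (hS : ∀ x : K, x ≠ 0 → 0 ≤ ν x → x ∈ S)
include hmul hS

theorem dvd_of_le {z w : S} (hz : (z : K) ≠ 0) (hle : ν z ≤ ν w) : z ∣ w := by
  by_cases hw : (w : K) = 0
  · exact (Subtype.ext hw : w = 0) ▸ dvd_zero z
  have hq : (w : K) * (z : K)⁻¹ ∈ S := by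
    refine hS _ (mul_ne_zero hw (inv_ne_zero hz)) ?_
    rw [hmul _ _ hw (inv_ne_zero hz), map_inv_eq_neg ν hmul hz, ← sub_eq_add_neg]
    exact sub_nonneg.2 hle
  refine ⟨⟨_, hq⟩, Subtype.ext ?_⟩
  simp only [Subring.coe_mul]
  field_simp

theorem span_pair_eq_span_singleton {x y : S} {c d : K} (hc : c ∈ S) (hd : d ∈ S)
    (hz : c * x + d * y ≠ 0) (hzν : ν (c * x + d * y) = ν x ⊓ ν y) :
    Ideal.span {x, y} =
      Ideal.span {(⟨c * x + d * y, S.add_mem (S.mul_mem hc x.2) (S.mul_mem hd y.2)⟩ : S)} := by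
  refine le_antisymm ?_ ?_
  · rw [Ideal.span_le, Set.insert_subset_iff, Set.singleton_subset_iff]
    exact ⟨Ideal.mem_span_singleton.2 (dvd_of_le ν hmul hS hz (hzν ▸ inf_le_left)),
      Ideal.mem_span_singleton.2 (dvd_of_le ν hmul hS hz (hzν ▸ inf_le_right))⟩
  · rw [Ideal.span_singleton_le_iff_mem, Ideal.mem_span_pair]
    exact ⟨⟨c, hc⟩, ⟨d, hd⟩, rfl⟩

theorem isBezout_of_bezout
    (hbez : ∀ x y : K, x ∈ S → y ∈ S → x ≠ 0 → y ≠ 0 →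
      ∃ c d : K, c ∈ S ∧ d ∈ S ∧ c * x + d * y ≠ 0 ∧ ν (c * x + d * y) = ν x ⊓ ν y) :
    IsBezout S := by
  refine IsBezout.iff_span_pair_isPrincipal.2 fun x y => ?_
  by_cases hx : x = 0
  · rw [hx, Ideal.span_insert_zero]
    exact ⟨⟨y, rfl⟩⟩
  by_cases hy : y = 0
  · rw [hy, Ideal.span_pair_comm, Ideal.span_insert_zero]
    exact ⟨⟨x, rfl⟩⟩
  obtain ⟨c, d, hc, hd, hz, hzν⟩ :=
    hbez x y x.2 y.2 (by exact_mod_cast hx) (by exact_mod_cast hy)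
  exact ⟨⟨_, span_pair_eq_span_singleton ν hmul hS hc hd hz hzν⟩⟩

end DemiValuation

theorem stmt_5_general {K : Type*} [Field K] {G : Type*} [Lattice G] [AddCommGroup G]
    [CovariantClass G G (· + ·) (· ≤ ·)]
    (ν : K → G)
    (hmul : ∀ a b : K, a ≠ 0 → b ≠ 0 → ν (a * b) = ν a + ν b)
    (S : Subring K) (hS : ∀ x : K, x ∈ S ↔ (x = 0 ∨ (x ≠ 0 ∧ 0 ≤ ν x)))
    (hbez : ∀ x y : K, x ∈ S → y ∈ S → x ≠ 0 → y ≠ 0 →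
      ∃ c d : K, c ∈ S ∧ d ∈ S ∧ c * x + d * y ≠ 0 ∧ ν (c * x + d * y) = ν x ⊓ ν y) :
    ∀ J : Ideal S, J.FG → J.IsPrincipal :=
  have : IsBezout S :=
    DemiValuation.isBezout_of_bezout ν hmul (fun x hx h => (hS x).2 (.inr ⟨hx, h⟩)) hbez
  IsBezout.isPrincipal_of_FG

/-- If a demi-valuation ν satisfies the Bézout property, then every finitely generated
ideal of its valuation ring is principal. -/
theorem stmt_5 {K : Type*} [Field K] {G : Type*} [Lattice G] [AddCommGroup G]
    [CovariantClass G G (· + ·) (· ≤ ·)]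
    (ν : K → G)
    (hmul : ∀ a b : K, a ≠ 0 → b ≠ 0 → ν (a * b) = ν a + ν b)
    (hadd : ∀ a b : K, a ≠ 0 → b ≠ 0 → a + b ≠ 0 → ν a ⊓ ν b ≤ ν (a + b))
    (S : Subring K) (hS : ∀ x : K, x ∈ S ↔ (x = 0 ∨ (x ≠ 0 ∧ 0 ≤ ν x)))
    (hbez : ∀ x y : K, x ∈ S → y ∈ S → x ≠ 0 → y ≠ 0 →
      ∃ c d : K, c ∈ S ∧ d ∈ S ∧ c * x + d * y ≠ 0 ∧ ν (c * x + d * y) = ν x ⊓ ν y) :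
    ∀ J : Ideal S, J.FG → J.IsPrincipal :=
  stmt_5_general ν hmul S hS hbez
end

section
/- Let K be a field, ν : K* → G a demi-valuation with valuation ring A = R(ν). If every finitely generated ideal of A is principal, then ν satisfies the Bézout property: for all nonzero x, y ∈ A there exist c, d ∈ A with cx+dy ≠ 0 and ν(cx+dy) = inf(ν(x),ν(y)). -/
/-!
A generator `g` of the ideal `(x, y)` of `A` is both a combination `g = c x + d y` with
`c, d ∈ A` and a common divisor of `x` and `y` in `A`. Divisibility in `A` gives
`ν g ≤ ν x ⊓ ν y`, while the demi-valuation inequality gives `ν x ⊓ ν y ≤ ν (c x + d y)`.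
-/

section DemiValuation

variable {K G : Type*} [CommRing K] [Lattice G] [AddCommMonoid G]
  [AddLeftMono G] (ν : K → G)

theorem map_le_map_mul_of_nonneg (hmul : ∀ a b : K, a ≠ 0 → b ≠ 0 → ν (a * b) = ν a + ν b)
    {a b : K} (ha : a ≠ 0) (hb : b ≠ 0) (hνb : 0 ≤ ν b) : ν a ≤ ν (a * b) := by
  rw [hmul a b ha hb]
  exact le_add_of_nonneg_right hνb

theorem inf_le_map_mul_add_mul [NoZeroDivisors K]
    (hmul : ∀ a b : K, a ≠ 0 → b ≠ 0 → ν (a * b) = ν a + ν b)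
    (hadd : ∀ a b : K, a ≠ 0 → b ≠ 0 → a + b ≠ 0 → ν a ⊓ ν b ≤ ν (a + b))
    {x y c d : K} (hx : x ≠ 0) (hy : y ≠ 0) (hc : c ≠ 0 → 0 ≤ ν c) (hd : d ≠ 0 → 0 ≤ ν d)
    (hne : c * x + d * y ≠ 0) : ν x ⊓ ν y ≤ ν (c * x + d * y) := by
  have le_mul {e z : K} (hz : z ≠ 0) (he : e ≠ 0) (hνe : 0 ≤ ν e) : ν z ≤ ν (e * z) :=
    mul_comm z e ▸ map_le_map_mul_of_nonneg ν hmul hz he hνe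
  rcases eq_or_ne c 0 with rfl | hc0
  · have hd0 : d ≠ 0 := by rintro rfl; simp at hne
    simpa using inf_le_right.trans (le_mul hy hd0 (hd hd0))
  rcases eq_or_ne d 0 with rfl | hd0
  · simpa using inf_le_left.trans (le_mul hx hc0 (hc hc0))
  exact (inf_le_inf (le_mul hx hc0 (hc hc0)) (le_mul hy hd0 (hd hd0))).trans
    (hadd _ _ (mul_ne_zero hc0 hx) (mul_ne_zero hd0 hy) hne)

end DemiValuation

/-- If every finitely generated ideal of the valuation ring of a demi-valuation ν is
principal, then ν satisfies the Bézout property. -/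
theorem stmt_6 {K : Type*} [Field K] {G : Type*} [Lattice G] [AddCommGroup G]
    [CovariantClass G G (· + ·) (· ≤ ·)]
    (ν : K → G)
    (hmul : ∀ a b : K, a ≠ 0 → b ≠ 0 → ν (a * b) = ν a + ν b)
    (hadd : ∀ a b : K, a ≠ 0 → b ≠ 0 → a + b ≠ 0 → ν a ⊓ ν b ≤ ν (a + b))
    (S : Subring K) (hS : ∀ x : K, x ∈ S ↔ (x = 0 ∨ (x ≠ 0 ∧ 0 ≤ ν x)))
    (hfg : ∀ J : Ideal S, J.FG → J.IsPrincipal) :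
    ∀ x y : K, x ∈ S → y ∈ S → x ≠ 0 → y ≠ 0 →
      ∃ c d : K, c ∈ S ∧ d ∈ S ∧ c * x + d * y ≠ 0 ∧ ν (c * x + d * y) = ν x ⊓ ν y := by
  intro x y hx hy hx0 hy0
  have hpos (s : S) (hs : (s : K) ≠ 0) : 0 ≤ ν s := (((hS s).mp s.2).resolve_left hs).2
  have : IsBezout S := ⟨hfg⟩
  set g := IsBezout.gcd (⟨x, hx⟩ : S) ⟨y, hy⟩
  obtain ⟨c, d, hcd⟩ := IsBezout.gcd_eq_sum (⟨x, hx⟩ : S) ⟨y, hy⟩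
  obtain ⟨a, hxa⟩ := IsBezout.gcd_dvd_left (⟨x, hx⟩ : S) ⟨y, hy⟩
  obtain ⟨b, hyb⟩ := IsBezout.gcd_dvd_right (⟨x, hx⟩ : S) ⟨y, hy⟩
  replace hcd : (c : K) * x + d * y = g := congrArg Subtype.val hcd
  replace hxa : x = g * a := congrArg Subtype.val hxa
  replace hyb : y = g * b := congrArg Subtype.val hyb
  have hg0 : (g : K) ≠ 0 := left_ne_zero_of_mul (hxa ▸ hx0)
  have ha0 : (a : K) ≠ 0 := right_ne_zero_of_mul (hxa ▸ hx0)
  have hb0 : (b : K) ≠ 0 := right_ne_zero_of_mul (hyb ▸ hy0)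
  have hgx : ν g ≤ ν x := hxa ▸ map_le_map_mul_of_nonneg ν hmul hg0 ha0 (hpos a ha0)
  have hgy : ν g ≤ ν y := hyb ▸ map_le_map_mul_of_nonneg ν hmul hg0 hb0 (hpos b hb0)
  refine ⟨c, d, c.2, d.2, hcd ▸ hg0, le_antisymm (hcd ▸ le_inf hgx hgy) ?_⟩
  exact inf_le_map_mul_add_mul ν hmul hadd hx0 hy0 (hpos c) (hpos d) (hcd ▸ hg0)
end

section
/- Let K be a field and ν : K* → ⊕_{i∈I} ℤ a demi-valuation into a direct sum of copies of ℤ with componentwise ordering, with valuation ring A = R(ν). If ν satisfies the Bézout property (for all nonzero x, y ∈ A there exist c, d ∈ A with cx+dy ≠ 0 and ν(cx+dy) = inf(ν(x),ν(y))), then A is a principal ideal domain. -/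
lemma finsupp_sum_mono' {I : Type*} (f g : I →₀ ℤ) (hle : ∀ i, g i ≤ f i) :
    (g.sum fun _ v => v) ≤ (f.sum fun _ v => v) := by
  classical
  have hg : g.sum (fun _ v => v) = ∑ j ∈ f.support ∪ g.support, g j :=
    Finsupp.sum_of_support_subset g Finset.subset_union_right _ (fun _ _ => rfl)
  have hf : f.sum (fun _ v => v) = ∑ j ∈ f.support ∪ g.support, f j :=
    Finsupp.sum_of_support_subset f Finset.subset_union_left _ (fun _ _ => rfl)
  rw [hg, hf]
  exact Finset.sum_le_sum fun i _ => hle i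

lemma finsupp_sum_eq' {I : Type*} (f g : I →₀ ℤ) (hle : ∀ i, g i ≤ f i)
    (hsum : (f.sum fun _ v => v) ≤ (g.sum fun _ v => v)) : ∀ i, g i = f i := by
  classical
  intro i
  by_contra h
  have hlt : g i < f i := lt_of_le_of_ne (hle i) h
  have hmem : i ∈ f.support ∪ g.support := by
    by_contra hmem
    simp only [Finset.mem_union, Finsupp.mem_support_iff, not_or, not_not] at hmem
    omega
  have hstrict : (∑ j ∈ f.support ∪ g.support, g j) < ∑ j ∈ f.support ∪ g.support, f j :=
    Finset.sum_lt_sum (fun j _ => hle j) ⟨i, hmem, hlt⟩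
  have hg : g.sum (fun _ v => v) = ∑ j ∈ f.support ∪ g.support, g j :=
    Finsupp.sum_of_support_subset g Finset.subset_union_right _ (fun _ _ => rfl)
  have hf : f.sum (fun _ v => v) = ∑ j ∈ f.support ∪ g.support, f j :=
    Finsupp.sum_of_support_subset f Finset.subset_union_left _ (fun _ _ => rfl)
  rw [hg, hf] at hsum
  omega

/-- If a ℤ-divisor demi-valuation satisfies the Bézout property, its valuation ring
is a principal ideal domain. -/
theorem stmt_8 {K : Type*} [Field K] {I : Type*}
    (ν : K → (I →₀ ℤ))
    (hmul : ∀ a b : K, a ≠ 0 → b ≠ 0 → ν (a * b) = ν a + ν b)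
    (hadd : ∀ a b : K, a ≠ 0 → b ≠ 0 → a + b ≠ 0 → ∀ i, min (ν a i) (ν b i) ≤ ν (a + b) i)
    (S : Subring K) (hS : ∀ x : K, x ∈ S ↔ (x = 0 ∨ (x ≠ 0 ∧ ∀ i, 0 ≤ ν x i)))
    (hbez : ∀ x y : K, x ∈ S → y ∈ S → x ≠ 0 → y ≠ 0 →
      ∃ c d : K, c ∈ S ∧ d ∈ S ∧ c * x + d * y ≠ 0 ∧
        ∀ i, ν (c * x + d * y) i = min (ν x i) (ν y i)) :
    IsPrincipalIdealRing S := by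
  classical
  have hν1 : ν 1 = 0 := by
    have h := hmul 1 1 one_ne_zero one_ne_zero
    rw [one_mul] at h
    have h2 : ν 1 + ν 1 = ν 1 + 0 := by rw [add_zero]; exact h.symm
    exact add_left_cancel h2
  have hinv : ∀ x : K, x ≠ 0 → ν x⁻¹ = -ν x := by
    intro x hx
    have h := hmul x x⁻¹ hx (inv_ne_zero hx)
    rw [mul_inv_cancel₀ hx, hν1] at h
    exact eq_neg_of_add_eq_zero_right h.symm
  -- divisibility via valuation comparison
  have hdvd : ∀ x y : K, x ≠ 0 → y ≠ 0 → (∀ i, ν x i ≤ ν y i) → y * x⁻¹ ∈ S := by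
    intro x y hx hy hle
    have hne : y * x⁻¹ ≠ 0 := mul_ne_zero hy (inv_ne_zero hx)
    refine (hS _).2 (Or.inr ⟨hne, fun i => ?_⟩)
    have h := hmul y x⁻¹ hy (inv_ne_zero hx)
    rw [hinv x hx] at h
    rw [h]
    simp only [Finsupp.coe_add, Finsupp.coe_neg, Pi.add_apply, Pi.neg_apply]
    have := hle i
    omega
  -- nonneg values on S
  have hnn : ∀ x : K, x ∈ S → x ≠ 0 → ∀ i, 0 ≤ ν x i := by
    intro x hxS hx
    rcases (hS x).1 hxS with h | h
    · exact absurd h hx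
    · exact h.2
  -- the measure
  set m : K → ℕ := fun x => ((ν x).sum fun _ v => v).toNat with hm
  have hsum_nn : ∀ x : K, x ∈ S → x ≠ 0 → 0 ≤ ((ν x).sum fun _ v => v) := by
    intro x hxS hx
    exact Finset.sum_nonneg fun i _ => hnn x hxS hx i
  constructor
  intro J
  by_cases hJ : J = ⊥
  · exact hJ ▸ ⟨⟨0, (Ideal.span_zero).symm⟩⟩
  · obtain ⟨x0, hx0J, hx0⟩ := Submodule.exists_mem_ne_zero_of_ne_bot hJ
    have hx0K : (x0 : K) ≠ 0 := fun h => hx0 (Subtype.ext h)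
    -- find element of minimal measure
    have hP : ∃ n, ∃ x : S, x ∈ J ∧ (x : K) ≠ 0 ∧ m (x : K) = n := ⟨_, x0, hx0J, hx0K, rfl⟩
    obtain ⟨x, hxJ, hxK, hxm⟩ := Nat.find_spec hP
    have hxmin : ∀ y : S, y ∈ J → (y : K) ≠ 0 → m (x : K) ≤ m (y : K) := by
      intro y hyJ hyK
      rw [hxm]
      exact Nat.find_min' hP ⟨y, hyJ, hyK, rfl⟩
    refine ⟨⟨x, le_antisymm ?_ ?_⟩⟩
    · -- J ≤ span {x}
      intro y hyJ
      rw [Ideal.submodule_span_eq, Ideal.mem_span_singleton]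
      by_cases hy0 : y = 0
      · exact hy0 ▸ dvd_zero x
      · have hyK : (y : K) ≠ 0 := fun h => hy0 (Subtype.ext h)
        obtain ⟨c, d, hcS, hdS, hz0, hzval⟩ :=
          hbez (x : K) (y : K) x.2 y.2 hxK hyK
        set z : K := c * x + d * y with hzdef
        have hzS : z ∈ S := S.add_mem (S.mul_mem hcS x.2) (S.mul_mem hdS y.2)
        have hzJ : (⟨z, hzS⟩ : S) ∈ J := by
          have : (⟨z, hzS⟩ : S) = ⟨c, hcS⟩ * x + ⟨d, hdS⟩ * y := rfl
          rw [this]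
          exact J.add_mem (J.mul_mem_left _ hxJ) (J.mul_mem_left _ hyJ)
        -- ν z i ≤ ν x i componentwise
        have hle : ∀ i, ν z i ≤ ν x i := fun i => (hzval i).trans_le (min_le_left _ _)
        -- minimality gives equality of sums
        have h1 : ((ν z).sum fun _ v => v) ≤ ((ν x).sum fun _ v => v) :=
          finsupp_sum_mono' (ν x) (ν z) hle
        have h2 : ((ν x).sum fun _ v => v) ≤ ((ν z).sum fun _ v => v) := by
          have hmle : m (x : K) ≤ m z := hxmin ⟨z, hzS⟩ hzJ hz0
          have hnx := hsum_nn (x : K) x.2 hxK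
          have hnz := hsum_nn z hzS hz0
          simp only [hm] at hmle
          omega
        have heq : ∀ i, ν z i = ν x i := finsupp_sum_eq' (ν x) (ν z) hle h2
        -- hence ν x ≤ ν y
        have hxy : ∀ i, ν (x : K) i ≤ ν (y : K) i := by
          intro i
          have := hzval i
          rw [heq i] at this
          omega
        have haS : (y : K) * (x : K)⁻¹ ∈ S := hdvd (x : K) (y : K) hxK hyK hxy
        refine ⟨⟨(y : K) * (x : K)⁻¹, haS⟩, ?_⟩
        ext
        push_cast
        field_simp
    · -- span {x} ≤ J
      rw [Ideal.submodule_span_eq, Ideal.span_le, Set.singleton_subset_iff]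
      exact hxJ
end

section
/- Let ν be a Krull valuation on K and w its Gauss extension to K(X). If a nonzero polynomial p(X) ∈ K[X] belongs to an ideal J of R(w), then every coefficient of p(X) belongs to J. -/
/-- The content of a polynomial: the minimum of ν over its nonzero coefficients
(junk value 0 for the zero polynomial). -/
noncomputable def polyVal {K G : Type*} [Field K] [AddCommGroup G] [LinearOrder G] [IsOrderedAddMonoid G]
    (ν : K → G) (p : Polynomial K) : G :=
  if h : p.support.Nonempty then
    (p.support.image fun n => ν (p.coeff n)).min' (h.image _)
  else 0

/-- The Gauss extension of ν to the field of rational functions K(X):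
w(p/q) = w(p) - w(q). -/
noncomputable def gaussExt {K G : Type*} [Field K] [AddCommGroup G] [LinearOrder G] [IsOrderedAddMonoid G]
    (ν : K → G) (f : RatFunc K) : G :=
  polyVal ν f.num - polyVal ν f.denom

/-!
For a nonzero coefficient `c` of `p`, the fraction `c / p` is in lowest terms once `p` is made
monic, so `w(c / p) = ν c - w(p)` directly from the definition, without Gauss's lemma. As `w(p)`
is the minimum of the values of the coefficients, `c / p ∈ R(w)`, whence `c = (c / p) p ∈ J`.
-/

open Polynomial

lemma Polynomial.gcd_C_eq_one {K : Type*} [Field K] [DecidableEq K] {c : K} (hc : c ≠ 0)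
    (p : K[X]) : gcd (C c) p = 1 :=
  (normalize_gcd _ _).symm.trans <| normalize_eq_one.mpr <|
    isUnit_of_dvd_unit (gcd_dvd_left _ _) (isUnit_C.mpr hc.isUnit)

namespace RatFunc

variable {K : Type*} [Field K]

lemma num_C_div {c : K} (hc : c ≠ 0) (p : K[X]) :
    (RatFunc.C c / algebraMap _ _ p).num = Polynomial.C (c * p.leadingCoeff⁻¹) := by
  classical
  rw [← algebraMap_C, num_div, gcd_C_eq_one hc, EuclideanDomain.div_one,
    EuclideanDomain.div_one, ← C_mul, mul_comm]

lemma denom_C_div {c : K} (hc : c ≠ 0) {p : K[X]} (hp : p ≠ 0) :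
    (RatFunc.C c / algebraMap _ _ p).denom = Polynomial.C p.leadingCoeff⁻¹ * p := by
  classical
  rw [← algebraMap_C, denom_div _ hp, gcd_C_eq_one hc, EuclideanDomain.div_one]

end RatFunc

section polyVal

variable {K G : Type*} [Field K] [AddCommGroup G] [LinearOrder G] [IsOrderedAddMonoid G]
  (ν : K → G)

lemma polyVal_le_coeff (p : K[X]) {n : ℕ} (h : p.coeff n ≠ 0) :
    polyVal ν p ≤ ν (p.coeff n) := by
  have hn : n ∈ p.support := mem_support_iff.mpr h
  rw [polyVal, dif_pos ⟨n, hn⟩]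
  exact Finset.min'_le _ _ (Finset.mem_image_of_mem _ hn)

lemma polyVal_C {a : K} (ha : a ≠ 0) : polyVal ν (C a) = ν a := by
  simp [polyVal, support_C ha]

variable {ν}

lemma polyVal_C_mul (hmul : ∀ a b : K, a ≠ 0 → b ≠ 0 → ν (a * b) = ν a + ν b)
    {b : K} (hb : b ≠ 0) {q : K[X]} (hq : q ≠ 0) :
    polyVal ν (C b * q) = ν b + polyVal ν q := by
  have hsupp : (C b * q).support = q.support := by
    ext m
    simp [coeff_C_mul, hb]
  have hqn : q.support.Nonempty := nonempty_support_iff.mpr hq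
  have himage : (q.support.image fun n => ν ((C b * q).coeff n)) =
      (q.support.image fun n => ν (q.coeff n)).image (ν b + ·) := by
    rw [Finset.image_image]
    refine Finset.image_congr fun n hn => ?_
    simp only [Function.comp, coeff_C_mul, hmul _ _ hb (mem_support_iff.mp hn)]
  simp only [polyVal, hsupp, dif_pos hqn, himage]
  rw [Finset.min'_image (fun _ _ h => add_le_add_right h _)]

lemma gaussExt_C_div (hmul : ∀ a b : K, a ≠ 0 → b ≠ 0 → ν (a * b) = ν a + ν b)
    {c : K} (hc : c ≠ 0) {p : K[X]} (hp : p ≠ 0) :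
    gaussExt ν (RatFunc.C c / algebraMap _ _ p) = ν c - polyVal ν p := by
  have hlc : p.leadingCoeff⁻¹ ≠ 0 := inv_ne_zero (leadingCoeff_ne_zero.mpr hp)
  rw [gaussExt, RatFunc.num_C_div hc, RatFunc.denom_C_div hc hp,
    polyVal_C ν (mul_ne_zero hc hlc), polyVal_C_mul hmul hlc hp, hmul _ _ hc hlc]
  abel

lemma gaussExt_coeff_div_nonneg (hmul : ∀ a b : K, a ≠ 0 → b ≠ 0 → ν (a * b) = ν a + ν b)
    {p : K[X]} (hp : p ≠ 0) {n : ℕ} (hc : p.coeff n ≠ 0) :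
    0 ≤ gaussExt ν (RatFunc.C (p.coeff n) / algebraMap _ _ p) := by
  rw [gaussExt_C_div hmul hc hp, sub_nonneg]
  exact polyVal_le_coeff ν p hc

end polyVal

theorem stmt_14_general {K G : Type*} [Field K] [AddCommGroup G] [LinearOrder G] [IsOrderedAddMonoid G]
    (ν : K → G)
    (hmul : ∀ a b : K, a ≠ 0 → b ≠ 0 → ν (a * b) = ν a + ν b)
    (S : Subring (RatFunc K))
    (hS : ∀ x : RatFunc K, x ∈ S ↔ (x = 0 ∨ 0 ≤ gaussExt ν x))
    (J : Ideal S) (p : Polynomial K) (hp : p ≠ 0)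
    (hpS : algebraMap (Polynomial K) (RatFunc K) p ∈ S)
    (hpJ : (⟨algebraMap (Polynomial K) (RatFunc K) p, hpS⟩ : S) ∈ J) :
    ∀ n : ℕ, ∃ h : (RatFunc.C (p.coeff n) : RatFunc K) ∈ S,
      (⟨RatFunc.C (p.coeff n), h⟩ : S) ∈ J := by
  intro n
  by_cases hc : p.coeff n = 0
  · simp only [hc, map_zero]
    exact ⟨S.zero_mem, J.zero_mem⟩
  set P := algebraMap (Polynomial K) (RatFunc K) p
  have hP : P ≠ 0 := RatFunc.algebraMap_ne_zero hp
  have hquot : RatFunc.C (p.coeff n) / P ∈ S :=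
    (hS _).mpr (Or.inr (gaussExt_coeff_div_nonneg hmul hp hc))
  have hfactor : RatFunc.C (p.coeff n) = RatFunc.C (p.coeff n) / P * P :=
    (div_mul_cancel₀ _ hP).symm
  refine ⟨hfactor ▸ S.mul_mem hquot hpS, ?_⟩
  have hmem : (⟨RatFunc.C (p.coeff n) / P, hquot⟩ * ⟨P, hpS⟩ : S) ∈ J := J.mul_mem_left _ hpJ
  convert hmem using 1
  exact Subtype.ext hfactor

/-- If a nonzero polynomial p belongs to an ideal J of the valuation ring R(w) of the
Gauss extension w, then all coefficients of p belong to J. -/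
theorem stmt_14 {K G : Type*} [Field K] [AddCommGroup G] [LinearOrder G] [IsOrderedAddMonoid G]
    (ν : K → G)
    (hmul : ∀ a b : K, a ≠ 0 → b ≠ 0 → ν (a * b) = ν a + ν b)
    (hadd : ∀ a b : K, a ≠ 0 → b ≠ 0 → a + b ≠ 0 → min (ν a) (ν b) ≤ ν (a + b))
    (S : Subring (RatFunc K))
    (hS : ∀ x : RatFunc K, x ∈ S ↔ (x = 0 ∨ 0 ≤ gaussExt ν x))
    (J : Ideal S) (p : Polynomial K) (hp : p ≠ 0)
    (hpS : algebraMap (Polynomial K) (RatFunc K) p ∈ S)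
    (hpJ : (⟨algebraMap (Polynomial K) (RatFunc K) p, hpS⟩ : S) ∈ J) :
    ∀ n : ℕ, ∃ h : (RatFunc.C (p.coeff n) : RatFunc K) ∈ S,
      (⟨RatFunc.C (p.coeff n), h⟩ : S) ∈ J :=
  stmt_14_general ν hmul S hS J p hp hpS hpJ
end

section
/- Let A be a Prüfer domain with field of fractions K and let f = r/s ∈ K(X) with r, s ∈ K[X] nonzero. Then there exists a nonzero polynomial p ∈ K[X] such that the fractional ideal of A generated by the coefficients of p equals the fractional ideal content c(r)·c(s)⁻¹, where c denotes the fractional ideal of A generated by the coefficients of a polynomial. -/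
/-- The content of a polynomial p ∈ K[X]: the fractional ideal of A generated by the
coefficients of p. -/
noncomputable def polyContent (A : Type*) [CommRing A] {K : Type*} [Field K]
    [Algebra A K] [IsFractionRing A K] (p : Polynomial K) :
    FractionalIdeal (nonZeroDivisors A) K :=
  FractionalIdeal.spanFinset A p.support (fun n => p.coeff n)

/-! Since `c(s)` is invertible, `c(s)⁻¹` is finitely generated, hence so is `c(r) c(s)⁻¹`; and
every finitely generated fractional ideal is the content of the polynomial whose coefficients
are a list of its generators. -/

open Polynomial

section PolyContent

variable {A : Type*} [CommRing A] {K : Type*} [Field K] [Algebra A K] [IsFractionRing A K]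

theorem coe_polyContent (p : K[X]) :
    (polyContent A p : Submodule A K) = Submodule.span A (Set.range p.coeff) := by
  rw [polyContent, FractionalIdeal.spanFinset_coe]
  refine le_antisymm (Submodule.span_mono (Set.image_subset_range _ _)) ?_
  rw [Submodule.span_le]
  rintro _ ⟨n, rfl⟩
  by_cases hn : p.coeff n = 0
  · simp [hn]
  · exact Submodule.subset_span ⟨n, mem_support_iff.mpr hn, rfl⟩

theorem polyContent_eq_zero_iff {p : K[X]} : polyContent A p = 0 ↔ p = 0 := by
  simp [polyContent, FractionalIdeal.spanFinset_eq_zero, Polynomial.ext_iff]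

theorem fg_polyContent (p : K[X]) : (polyContent A p : Submodule A K).FG := by
  rw [polyContent, FractionalIdeal.spanFinset_coe]
  exact Submodule.fg_span (p.support.finite_toSet.image _)

theorem range_coeff_ofFn {n : ℕ} [DecidableEq K] (v : Fin n → K) :
    Set.range (ofFn n v).coeff ⊆ insert 0 (Set.range v) := by
  rintro _ ⟨i, rfl⟩
  by_cases hi : i < n
  · exact Or.inr ⟨⟨i, hi⟩, (ofFn_coeff_eq_val_of_lt v hi).symm⟩
  · exact Or.inl (ofFn_coeff_eq_zero_of_ge v (not_lt.mp hi))

theorem polyContent_ofFn {n : ℕ} [DecidableEq K] (v : Fin n → K) :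
    (polyContent A (ofFn n v) : Submodule A K) = Submodule.span A (Set.range v) := by
  rw [coe_polyContent]
  refine le_antisymm ?_ (Submodule.span_mono ?_)
  · exact (Submodule.span_mono (range_coeff_ofFn v)).trans Submodule.span_insert_zero.le
  · rintro _ ⟨i, rfl⟩
    exact ⟨i, ofFn_coeff_eq_val_of_lt v i.isLt⟩

theorem exists_polyContent_eq_of_fg {I : FractionalIdeal (nonZeroDivisors A) K}
    (hI : (I : Submodule A K).FG) : ∃ p : K[X], polyContent A p = I := by
  classical
  obtain ⟨n, v, hv⟩ := Submodule.fg_iff_exists_fin_generating_family.mp hI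
  exact ⟨ofFn n v, FractionalIdeal.coeToSubmodule_inj.mp (by rw [polyContent_ofFn, hv])⟩

end PolyContent

/-- In a Prüfer domain A with fraction field K, for any f = r/s in K(X) there is a
nonzero polynomial p with content c(p) = c(r) · c(s)⁻¹. -/
theorem stmt_15 {A : Type*} [CommRing A] [IsDomain A] {K : Type*} [Field K]
    [Algebra A K] [IsFractionRing A K]
    (hpruefer : ∀ I : FractionalIdeal (nonZeroDivisors A) K,
      I ≠ 0 → (I : Submodule A K).FG → I * I⁻¹ = 1)
    (r s : Polynomial K) (hr : r ≠ 0) (hs : s ≠ 0) :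
    ∃ p : Polynomial K, p ≠ 0 ∧
      polyContent A p = polyContent A r * (polyContent A s)⁻¹ := by
  have hunit : IsUnit (polyContent A s)⁻¹ :=
    IsUnit.of_mul_eq_one_right _
      (hpruefer _ (polyContent_eq_zero_iff.not.mpr hs) (fg_polyContent s))
  have hfg : ((polyContent A r * (polyContent A s)⁻¹ : FractionalIdeal _ K) :
      Submodule A K).FG := by
    rw [FractionalIdeal.coe_mul]
    exact (fg_polyContent r).mul (FractionalIdeal.fg_of_isUnit _ hunit)
  obtain ⟨p, hp⟩ := exists_polyContent_eq_of_fg hfg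
  refine ⟨p, ?_, hp⟩
  rintro rfl
  rw [polyContent_eq_zero_iff.mpr rfl, eq_comm, hunit.mul_left_eq_zero,
    polyContent_eq_zero_iff] at hp
  exact hr hp
end

section
/- Let A be a Dedekind domain with fraction field K and R(w) the Kronecker function ring in K(X). Then the maps J ↦ J ∩ A and 𝔟 ↦ 𝔟·R(w) are mutually inverse bijections between the ideals of R(w) and the ideals of A. -/
section KroneckerAux

open Polynomial FractionalIdeal

variable {A : Type*} [CommRing A] {K : Type*} [Field K] [Algebra A K] [IsFractionRing A K]

lemma coeff_mem_polyContent (p : Polynomial K) (n : ℕ) : p.coeff n ∈ polyContent A p := by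
  by_cases h : n ∈ p.support
  · rw [← FractionalIdeal.mem_coe, polyContent, spanFinset_coe]
    exact Submodule.subset_span ⟨n, h, rfl⟩
  · rw [Polynomial.notMem_support_iff.mp h]
    exact zero_mem _

lemma polyContent_le_iff {p : Polynomial K} {I : FractionalIdeal (nonZeroDivisors A) K} :
    polyContent A p ≤ I ↔ ∀ n, p.coeff n ∈ I := by
  constructor
  · exact fun h n => h (coeff_mem_polyContent p n)
  · intro h
    rw [← FractionalIdeal.coe_le_coe, polyContent, spanFinset_coe]
    rw [Submodule.span_le]
    rintro _ ⟨n, _, rfl⟩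
    exact FractionalIdeal.mem_coe.mpr (h n)

lemma polyContent_ne_zero {p : Polynomial K} (h : p ≠ 0) : polyContent A p ≠ 0 := by
  rw [polyContent, spanFinset_ne_zero]
  exact ⟨p.natDegree, Polynomial.mem_support_iff.mpr (Polynomial.leadingCoeff_ne_zero.mpr h),
    Polynomial.leadingCoeff_ne_zero.mpr h⟩

lemma polyContent_one : polyContent A (1 : Polynomial K) = 1 := by
  apply le_antisymm
  · apply polyContent_le_iff.mpr
    intro n
    rw [Polynomial.coeff_one]
    split
    · exact FractionalIdeal.one_mem_one _
    · exact zero_mem _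
  · intro x hx
    obtain ⟨a, rfl⟩ := (FractionalIdeal.mem_one_iff _).mp hx
    have h1 : (1 : Polynomial K).coeff 0 ∈ polyContent A (1 : Polynomial K) :=
      coeff_mem_polyContent _ 0
    rw [Polynomial.coeff_one_zero, ← FractionalIdeal.mem_coe] at h1
    have h2 := Submodule.smul_mem _ a h1
    rw [Algebra.smul_def, mul_one] at h2
    exact FractionalIdeal.mem_coe.mp h2

lemma polyContent_mul_le (p q : Polynomial K) :
    polyContent A (p * q) ≤ polyContent A p * polyContent A q := by
  apply polyContent_le_iff.mpr
  intro n
  rw [Polynomial.coeff_mul, ← FractionalIdeal.mem_coe]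
  refine sum_mem fun c _ => ?_
  exact FractionalIdeal.mem_coe.mpr
    (FractionalIdeal.mul_mem_mul (coeff_mem_polyContent p c.1) (coeff_mem_polyContent q c.2))

lemma spanSingleton_mul_polyContent_le (a : K) (p : Polynomial K) :
    FractionalIdeal.spanSingleton (nonZeroDivisors A) a * polyContent A p ≤
      polyContent A (Polynomial.C a * p) := by
  rw [FractionalIdeal.mul_le]
  intro i hi j hj
  obtain ⟨z, rfl⟩ := (FractionalIdeal.mem_spanSingleton _).mp hi
  have key : ∀ j, j ∈ polyContent A p → a * j ∈ polyContent A (Polynomial.C a * p) := by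
    intro j hj
    rw [← FractionalIdeal.mem_coe, polyContent, spanFinset_coe] at hj
    refine Submodule.span_induction
      (p := fun j _ => a * j ∈ polyContent A (Polynomial.C a * p)) ?_
      (by show a * (0:K) ∈ _; rw [mul_zero]; exact zero_mem _)
      (fun x y _ _ hx hy => by
        show a * (x + y) ∈ _
        rw [mul_add, ← FractionalIdeal.mem_coe]
        exact add_mem (FractionalIdeal.mem_coe.mpr hx) (FractionalIdeal.mem_coe.mpr hy))
      (fun z x _ hx => ?_) hj
    · rintro _ ⟨n, _, rfl⟩
      show a * p.coeff n ∈ _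
      have := coeff_mem_polyContent (A := A) (Polynomial.C a * p) n
      rwa [Polynomial.coeff_C_mul] at this
    · show a * (z • x) ∈ _
      rw [mul_smul_comm, ← FractionalIdeal.mem_coe]
      exact Submodule.smul_mem _ _ (FractionalIdeal.mem_coe.mpr hx)
  rw [smul_mul_assoc, ← FractionalIdeal.mem_coe]
  exact Submodule.smul_mem _ _ (FractionalIdeal.mem_coe.mpr (key j hj))

lemma polyContent_C_le {c : K} {p : Polynomial K} (h : c ∈ polyContent A p) :
    polyContent A (Polynomial.C c) ≤ polyContent A p := by
  apply polyContent_le_iff.mpr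
  intro n
  rw [Polynomial.coeff_C]
  split
  · exact h
  · exact zero_mem _

end KroneckerAux

/-- For a Dedekind domain A with Kronecker function ring R(w), the maps J ↦ J ∩ A and
𝔟 ↦ 𝔟·R(w) are mutually inverse bijections between the ideals of R(w) and of A. -/
theorem stmt_17 {A : Type*} [CommRing A] [IsDedekindDomain A] {K : Type*} [Field K]
    [Algebra A K] [IsFractionRing A K]
    (S : Subring (RatFunc K))
    (hS : ∀ x : RatFunc K, x ∈ S ↔
      ∃ r s : Polynomial K, s ≠ 0 ∧
        x = algebraMap (Polynomial K) (RatFunc K) r / algebraMap (Polynomial K) (RatFunc K) s ∧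
        polyContent A r ≤ polyContent A s)
    (φ : A →+* S)
    (hφ : ∀ a : A, (φ a : RatFunc K) = RatFunc.C (algebraMap A K a)) :
    (∀ J : Ideal S, Ideal.map φ (Ideal.comap φ J) = J) ∧
    (∀ b : Ideal A, Ideal.comap φ (Ideal.map φ b) = b) := by
  set θ := algebraMap (Polynomial K) (RatFunc K) with hθdef
  have θinj : Function.Injective θ := RatFunc.algebraMap_injective K
  have φc : ∀ a : A, (φ a : RatFunc K) = θ (Polynomial.C (algebraMap A K a)) := by
    intro a; rw [hφ, RatFunc.algebraMap_C]
  have φinj : Function.Injective φ := by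
    intro a b h
    apply IsFractionRing.injective A K
    apply RatFunc.C.injective
    rw [← hφ, ← hφ, h]
  have hmemS : ∀ r s : Polynomial K, s ≠ 0 → polyContent A r ≤ polyContent A s →
      θ r / θ s ∈ S := fun r s h1 h2 => (hS _).mpr ⟨r, s, h1, rfl, h2⟩
  have hintS : ∀ g : Polynomial K,
      (∀ n, g.coeff n ∈ (1 : FractionalIdeal (nonZeroDivisors A) K)) → θ g ∈ S := by
    intro g hg
    have h1 : θ g = θ g / θ 1 := by rw [map_one, div_one]
    rw [h1]
    refine hmemS g 1 one_ne_zero (le_trans (polyContent_le_iff.mpr fun n => hg n) ?_)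
    rw [polyContent_one]
  constructor
  · -- β ∘ α = id
    intro J
    refine le_antisymm Ideal.map_comap_le ?_
    intro x hx
    by_cases hx0 : x = 0
    · rw [hx0]; exact zero_mem _
    obtain ⟨r, s, hs, hxe, hrs⟩ := (hS _).mp x.2
    have hsne : θ s ≠ 0 := fun h => hs (θinj (by rw [h, map_zero]))
    have hrne : θ r ≠ 0 := by
      intro h
      apply hx0
      apply Subtype.ext
      rw [hxe, h, zero_div, ZeroMemClass.coe_zero]
    have hr0 : r ≠ 0 := fun h => hrne (by rw [h, map_zero])
    have hcs : polyContent A s ≠ 0 := polyContent_ne_zero hs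
    have hone : (1 : K) ∈ (polyContent A s)⁻¹ * polyContent A s := by
      rw [mul_comm, mul_inv_cancel₀ hcs]
      exact FractionalIdeal.one_mem_one _
    rw [← FractionalIdeal.mem_coe, FractionalIdeal.coe_mul] at hone
    have key : ∀ y : K, y ∈ ((polyContent A s)⁻¹ :
          FractionalIdeal (nonZeroDivisors A) K).coeToSubmodule *
          (polyContent A s).coeToSubmodule →
        ∃ z ∈ Ideal.map φ (Ideal.comap φ J), (z : RatFunc K) = RatFunc.C y * (x : RatFunc K) := by
      intro y hy
      refine Submodule.mul_induction_on hy ?_ ?_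
      · intro m hm d hd
        have hm' : ∀ u ∈ polyContent A s, m * u ∈ (1 : FractionalIdeal (nonZeroDivisors A) K) := by
          have h2 : m ∈ (1 : FractionalIdeal (nonZeroDivisors A) K) / polyContent A s := by
            rw [← FractionalIdeal.inv_eq]
            exact FractionalIdeal.mem_coe.mp hm
          exact fun u hu => (FractionalIdeal.mem_div_iff_of_ne_zero hcs).mp h2 u hu
        have hd' : d ∈ polyContent A s := FractionalIdeal.mem_coe.mp hd
        -- the element G = θ (C m * r) ∈ S
        have hGS : θ (Polynomial.C m * r) ∈ S := hintS _ (fun n => by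
          rw [Polynomial.coeff_C_mul]
          exact hm' _ (hrs (coeff_mem_polyContent r n)))
        have huS : θ (Polynomial.C m * s) ∈ S := hintS _ (fun n => by
          rw [Polynomial.coeff_C_mul]
          exact hm' _ (coeff_mem_polyContent s n))
        set G : S := ⟨θ (Polynomial.C m * r), hGS⟩ with hGdef
        have hGJ : G ∈ J := by
          have hGe : G = (⟨θ (Polynomial.C m * s), huS⟩ : S) * x := by
            apply Subtype.ext
            show θ (Polynomial.C m * r) = θ (Polynomial.C m * s) * (x : RatFunc K)
            rw [hxe, map_mul, map_mul]
            field_simp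
          rw [hGe]
          exact J.mul_mem_left _ hx
        -- coefficients
        have hcoef : ∀ n : ℕ, ∃ a : A, algebraMap A K a = m * r.coeff n := fun n =>
          (FractionalIdeal.mem_one_iff _).mp (hm' _ (hrs (coeff_mem_polyContent r n)))
        choose av hav using hcoef
        have hφav : ∀ n, φ (av n) ∈ J := by
          intro n
          have hSn : θ (Polynomial.C (r.coeff n)) / θ r ∈ S :=
            hmemS _ r hr0 (polyContent_C_le (coeff_mem_polyContent r n))
          have he : φ (av n) = G * ⟨_, hSn⟩ := by
            apply Subtype.ext
            show (φ (av n) : RatFunc K) =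
              θ (Polynomial.C m * r) * (θ (Polynomial.C (r.coeff n)) / θ r)
            rw [φc, hav, Polynomial.C_mul, map_mul, map_mul]
            field_simp
          rw [he]
          exact J.mul_mem_right _ hGJ
        have hXi : ∀ i : ℕ, θ (Polynomial.X ^ i) ∈ S := fun i => hintS _ (fun n => by
          rw [Polynomial.coeff_X_pow]
          split
          · exact FractionalIdeal.one_mem_one _
          · exact (FractionalIdeal.mem_one_iff _).mpr ⟨0, map_zero _⟩)
        have hGsum : G = ∑ n ∈ r.support, φ (av n) * ⟨θ (Polynomial.X ^ n), hXi n⟩ := by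
          apply Subtype.ext
          push_cast
          show θ (Polynomial.C m * r) =
            ∑ n ∈ r.support, (φ (av n) : RatFunc K) * θ (Polynomial.X ^ n)
          have hr2 : Polynomial.C m * r =
              ∑ n ∈ r.support, Polynomial.C (m * r.coeff n) * Polynomial.X ^ n := by
            conv_lhs => rw [r.as_sum_support, Finset.mul_sum]
            refine Finset.sum_congr rfl fun n _ => ?_
            rw [← Polynomial.C_mul_X_pow_eq_monomial, ← mul_assoc, ← Polynomial.C_mul]
          rw [hr2, map_sum]
          refine Finset.sum_congr rfl fun n _ => ?_
          rw [map_mul, φc, hav]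
        have hGM : G ∈ Ideal.map φ (Ideal.comap φ J) := by
          rw [hGsum]
          exact Ideal.sum_mem _ fun n _ =>
            Ideal.mul_mem_right _ _ (Ideal.mem_map_of_mem φ (hφav n))
        have hdS : θ (Polynomial.C d) / θ s ∈ S := hmemS _ s hs (polyContent_C_le hd')
        refine ⟨G * ⟨_, hdS⟩, Ideal.mul_mem_right _ _ hGM, ?_⟩
        show θ (Polynomial.C m * r) * (θ (Polynomial.C d) / θ s) =
          RatFunc.C (m * d) * (x : RatFunc K)
        have hc : RatFunc.C (m * d) = θ (Polynomial.C m) * θ (Polynomial.C d) := by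
          rw [← RatFunc.algebraMap_C (m * d), Polynomial.C_mul, map_mul]
        rw [hxe, hc, map_mul]
        ring
      · rintro y₁ y₂ ⟨z₁, hz₁, he₁⟩ ⟨z₂, hz₂, he₂⟩
        refine ⟨z₁ + z₂, Ideal.add_mem _ hz₁ hz₂, ?_⟩
        push_cast
        rw [he₁, he₂, map_add, add_mul]
    obtain ⟨z, hz, hze⟩ := key 1 hone
    have hzx : z = x := Subtype.ext (by rw [hze, map_one, one_mul])
    exact hzx ▸ hz
  · -- α ∘ β = id
    intro b
    refine le_antisymm ?_ Ideal.le_comap_map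
    obtain ⟨n, g, hg⟩ := Submodule.fg_iff_exists_fin_generating_family.mp
      (IsNoetherian.noetherian b)
    by_cases hbot : b = ⊥
    · rw [hbot, Ideal.map_bot]
      intro a ha
      rw [Ideal.mem_comap, Ideal.mem_bot] at ha
      rw [Ideal.mem_bot]
      exact φinj (by rw [ha, map_zero])
    set f : Polynomial K :=
      ∑ i : Fin n, Polynomial.C (algebraMap A K (g i)) * Polynomial.X ^ (i : ℕ) with hfdef
    have hcoeff : ∀ i : Fin n, f.coeff (i : ℕ) = algebraMap A K (g i) := by
      intro i
      rw [hfdef, Polynomial.finset_sum_coeff, Finset.sum_eq_single i]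
      · rw [Polynomial.coeff_C_mul, Polynomial.coeff_X_pow, if_pos rfl, mul_one]
      · intro j _ hji
        have hne : (i : ℕ) ≠ (j : ℕ) := fun h => hji (Fin.ext h).symm
        rw [Polynomial.coeff_C_mul, Polynomial.coeff_X_pow, if_neg hne, mul_zero]
      · intro h; exact absurd (Finset.mem_univ i) h
    have hmemb : ∀ i : Fin n, g i ∈ b := fun i => hg ▸ Submodule.subset_span ⟨i, rfl⟩
    have hfle : polyContent A f ≤ (b : FractionalIdeal (nonZeroDivisors A) K) := by
      apply polyContent_le_iff.mpr
      intro k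
      rw [hfdef, Polynomial.finset_sum_coeff, ← FractionalIdeal.mem_coe]
      refine sum_mem fun i _ => ?_
      rw [Polynomial.coeff_C_mul, Polynomial.coeff_X_pow]
      split
      · rw [mul_one]
        exact FractionalIdeal.mem_coe.mpr
          ((FractionalIdeal.mem_coeIdeal _).mpr ⟨g i, hmemb i, rfl⟩)
      · rw [mul_zero]; exact zero_mem _
    have hlef : (b : FractionalIdeal (nonZeroDivisors A) K) ≤ polyContent A f := by
      intro x hxmem
      obtain ⟨a, hab, rfl⟩ := (FractionalIdeal.mem_coeIdeal _).mp hxmem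
      rw [← hg] at hab
      refine Submodule.span_induction
        (p := fun a _ => algebraMap A K a ∈ polyContent A f) ?_ ?_ ?_ ?_ hab
      · rintro _ ⟨i, rfl⟩
        show algebraMap A K (g i) ∈ polyContent A f
        exact hcoeff i ▸ coeff_mem_polyContent (A := A) f (i : ℕ)
      · show algebraMap A K 0 ∈ polyContent A f
        rw [map_zero, ← FractionalIdeal.mem_coe]
        exact zero_mem _
      · intro u v _ _ hu hv
        show algebraMap A K (u + v) ∈ polyContent A f
        rw [map_add, ← FractionalIdeal.mem_coe]
        exact add_mem (FractionalIdeal.mem_coe.mpr hu) (FractionalIdeal.mem_coe.mpr hv)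
      · intro z u _ hu
        show algebraMap A K (z • u) ∈ polyContent A f
        rw [smul_eq_mul, map_mul, ← Algebra.smul_def, ← FractionalIdeal.mem_coe]
        exact Submodule.smul_mem _ _ (FractionalIdeal.mem_coe.mpr hu)
    have hf0 : f ≠ 0 := by
      intro h
      apply hbot
      refine (Submodule.eq_bot_iff _).mpr fun a hab => ?_
      have h1 : algebraMap A K a ∈ polyContent A f :=
        hlef ((FractionalIdeal.mem_coeIdeal _).mpr ⟨a, hab, rfl⟩)
      rw [h, show polyContent A (0 : Polynomial K) = 0 from by
        rw [polyContent]
        exact FractionalIdeal.spanFinset_eq_zero.mpr (by simp)] at h1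
      have h2 : algebraMap A K a = 0 := by
        rwa [← FractionalIdeal.mem_coe, FractionalIdeal.coe_zero, Submodule.mem_bot] at h1
      exact (map_eq_zero_iff _ (IsFractionRing.injective A K)).mp h2
    have hθf : θ f ≠ 0 := fun h => hf0 (θinj (by rw [h, map_zero]))
    have hfS : θ f ∈ S := hintS f fun k =>
      FractionalIdeal.coeIdeal_le_one (hfle (coeff_mem_polyContent f k))
    set F : S := ⟨θ f, hfS⟩ with hFdef
    have hmaple : Ideal.map φ b ≤ Ideal.span {F} := by
      rw [Ideal.map_le_iff_le_comap]
      intro a hab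
      rw [Ideal.mem_comap, Ideal.mem_span_singleton]
      have hq : θ (Polynomial.C (algebraMap A K a)) / θ f ∈ S :=
        hmemS _ f hf0 (polyContent_C_le
          (hlef ((FractionalIdeal.mem_coeIdeal _).mpr ⟨a, hab, rfl⟩)))
      refine ⟨⟨_, hq⟩, Subtype.ext ?_⟩
      show (φ a : RatFunc K) = θ f * (θ (Polynomial.C (algebraMap A K a)) / θ f)
      rw [φc]
      field_simp
    intro a ha
    rw [Ideal.mem_comap] at ha
    obtain ⟨y, hy⟩ := Ideal.mem_span_singleton'.mp (hmaple ha)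
    obtain ⟨r, s, hs, hye, hrs⟩ := (hS _).mp y.2
    have hsne : θ s ≠ 0 := fun h => hs (θinj (by rw [h, map_zero]))
    have heq : Polynomial.C (algebraMap A K a) * s = f * r := by
      apply θinj
      have h1 : (φ a : RatFunc K) = θ f * (θ r / θ s) := by
        rw [← hy]
        push_cast
        rw [hye]
        ring
      rw [φc] at h1
      rw [map_mul, map_mul, h1, mul_assoc, div_mul_cancel₀ _ hsne]
    have hchain : FractionalIdeal.spanSingleton (nonZeroDivisors A) (algebraMap A K a) *
        polyContent A s ≤ polyContent A f * polyContent A s := by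
      refine le_trans (spanSingleton_mul_polyContent_le _ _) ?_
      rw [heq]
      refine le_trans (polyContent_mul_le _ _) ?_
      exact mul_right_mono (a := polyContent A f) hrs
    have hcan : FractionalIdeal.spanSingleton (nonZeroDivisors A) (algebraMap A K a) ≤
        polyContent A f :=
      (mul_le_mul_iff_left₀ (pos_iff_ne_zero.2 (polyContent_ne_zero hs))).mp hchain
    have hmem : algebraMap A K a ∈ (b : FractionalIdeal (nonZeroDivisors A) K) :=
      hfle (FractionalIdeal.spanSingleton_le_iff_mem.mp hcan)
    obtain ⟨a', ha'b, ha'e⟩ := (FractionalIdeal.mem_coeIdeal _).mp hmem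
    rwa [← IsFractionRing.injective A K ha'e]
end
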